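/- arXiv:math/0301334 — 4 statements merged into one kernel-verified Lean document; each statement's English description precedes it below -/
import Mathlib

section
/- For the function u(z) = 4(Im z + 1)/|z+i|² (the least harmonic majorant of |−4/(z+i)²|), one has ∑_{k ≥ 0} u(i e^{k/γ}) = ∑_{k≥0} 4 e^{−k/γ}/(1 + e^{−k/γ}), and this sum is asymptotically equal to 4 γ log 2 as γ → ∞ (ratio tending to 1). -/
open Real Filter MeasureTheory Set

noncomputable def gfun (γ t : ℝ) : ℝ := 4 * Real.exp (-t / γ) / (1 + Real.exp (-t / γ))

lemma gfun_nonneg (γ t : ℝ) : 0 ≤ gfun γ t := by unfold gfun; positivity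

lemma gfun_anti {γ : ℝ} (hγ : 0 < γ) : Antitone (gfun γ) := by
  intro s t hst
  unfold gfun
  have h1 : Real.exp (-t/γ) ≤ Real.exp (-s/γ) := by
    apply Real.exp_le_exp.2
    exact (div_le_div_iff_of_pos_right hγ).2 (by linarith)
  have p1 : (0:ℝ) < 1 + Real.exp (-t/γ) := by positivity
  have p2 : (0:ℝ) < 1 + Real.exp (-s/γ) := by positivity
  rw [div_le_div_iff₀ p1 p2]
  nlinarith [Real.exp_pos (-t/γ), Real.exp_pos (-s/γ)]

lemma gfun_continuous (γ : ℝ) : Continuous (gfun γ) := by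
  unfold gfun
  apply Continuous.div (by continuity) (by continuity)
  intro t; positivity

lemma hasDerivF {γ : ℝ} (hγ : 0 < γ) (t : ℝ) :
    HasDerivAt (fun t => -(4*γ) * Real.log (1 + Real.exp (-t/γ))) (gfun γ t) t := by
  have h1 : HasDerivAt (fun t : ℝ => -t/γ) (-1/γ) t := by
    simpa using ((hasDerivAt_id t).neg.div_const γ)
  have h2 : HasDerivAt (fun t : ℝ => Real.exp (-t/γ)) (Real.exp (-t/γ) * (-1/γ)) t := h1.exp
  have h3 : HasDerivAt (fun t : ℝ => 1 + Real.exp (-t/γ)) (Real.exp (-t/γ) * (-1/γ)) t :=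
    h2.const_add 1
  have hpos : (0:ℝ) < 1 + Real.exp (-t/γ) := by positivity
  have h4 : HasDerivAt (fun t : ℝ => Real.log (1 + Real.exp (-t/γ)))
      ((Real.exp (-t/γ) * (-1/γ)) / (1 + Real.exp (-t/γ))) t := h3.log hpos.ne'
  have h5 := h4.const_mul (-(4*γ))
  refine h5.congr_deriv ?_
  unfold gfun
  field_simp

lemma tendstoF {γ : ℝ} (hγ : 0 < γ) :
    Tendsto (fun t => -(4*γ) * Real.log (1 + Real.exp (-t/γ))) atTop (nhds 0) := by
  have h1 : Tendsto (fun t : ℝ => -t/γ) atTop atBot :=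
    (tendsto_neg_atTop_atBot).atBot_div_const hγ
  have h2 : Tendsto (fun t : ℝ => Real.exp (-t/γ)) atTop (nhds 0) :=
    Real.tendsto_exp_atBot.comp h1
  have h3 : Tendsto (fun t : ℝ => Real.log (1 + Real.exp (-t/γ))) atTop (nhds 0) := by
    have hc : ContinuousAt Real.log ((1:ℝ) + 0) := Real.continuousAt_log (by norm_num)
    have := hc.tendsto.comp (tendsto_const_nhds.add h2)
    simpa [Function.comp_def] using this
  simpa using h3.const_mul (-(4*γ))

lemma integrable_gfun {γ : ℝ} (hγ : 0 < γ) : IntegrableOn (gfun γ) (Ioi 0) := by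
  exact integrableOn_Ioi_deriv_of_nonneg' (fun x _ => hasDerivF hγ x)
    (fun x _ => gfun_nonneg γ x) (tendstoF hγ)

lemma integral_gfun {γ : ℝ} (hγ : 0 < γ) :
    ∫ t in Ioi (0:ℝ), gfun γ t = 4 * γ * Real.log 2 := by
  rw [integral_Ioi_of_hasDerivAt_of_nonneg' (fun x _ => hasDerivF hγ x)
    (fun x _ => gfun_nonneg γ x) (tendstoF hγ)]
  norm_num [Real.exp_zero]

lemma summable_gfun {γ : ℝ} (hγ : 0 < γ) : Summable (fun k : ℕ => gfun γ k) := by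
  have hgeo : Summable (fun k : ℕ => 4 * Real.exp (-1/γ) ^ k) := by
    apply Summable.mul_left
    apply summable_geometric_of_lt_one (Real.exp_nonneg _)
    refine Real.exp_lt_one_iff.2 ?_
    rw [neg_div]
    have : (0:ℝ) < 1/γ := by positivity
    linarith
  have hle : ∀ k : ℕ, gfun γ (k:ℝ) ≤ 4 * Real.exp (-1/γ) ^ k := by
    intro k
    unfold gfun
    have h1 : Real.exp (-1/γ) ^ k = Real.exp (-(k:ℝ)/γ) := by
      rw [← Real.exp_nat_mul]
      congr 1
      ring
    rw [h1]
    apply div_le_self (by positivity)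
    nlinarith [Real.exp_pos (-(k:ℝ)/γ)]
  exact Summable.of_nonneg_of_le (g := fun k : ℕ => gfun γ (k:ℝ))
    (f := fun k : ℕ => 4 * Real.exp (-1/γ) ^ k)
    (fun k => gfun_nonneg γ _) hle hgeo

-- interval integral bounds
lemma interval_int_le {γ : ℝ} (hγ : 0 < γ) (k : ℕ) :
    ∫ t in (k:ℝ)..(k:ℝ)+1, gfun γ t ≤ gfun γ k := by
  have h := intervalIntegral.integral_mono_on (μ := volume) (by linarith : (k:ℝ) ≤ (k:ℝ)+1)
    ((gfun_continuous γ).intervalIntegrable _ _) intervalIntegrable_const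
    (fun t ht => gfun_anti hγ ht.1)
  simpa using h

lemma le_interval_int {γ : ℝ} (hγ : 0 < γ) (k : ℕ) :
    gfun γ ((k:ℝ)+1) ≤ ∫ t in (k:ℝ)..(k:ℝ)+1, gfun γ t := by
  have h := intervalIntegral.integral_mono_on (μ := volume) (by linarith : (k:ℝ) ≤ (k:ℝ)+1)
    intervalIntegrable_const ((gfun_continuous γ).intervalIntegrable _ _)
    (fun t ht => gfun_anti hγ ht.2)
  simpa using h

lemma sum_adj {γ : ℝ} (hγ : 0 < γ) (n : ℕ) :
    ∑ k ∈ Finset.range n, ∫ t in (k:ℝ)..(k:ℝ)+1, gfun γ t = ∫ t in (0:ℝ)..(n:ℝ), gfun γ t := by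
  have := intervalIntegral.sum_integral_adjacent_intervals (a := fun k : ℕ => (k:ℝ)) (n := n)
    (f := gfun γ) (μ := volume) (fun k _ => (gfun_continuous γ).intervalIntegrable _ _)
  simp only [Nat.cast_succ] at this
  convert this using 2 <;> push_cast <;> ring

lemma integral_le_tsum {γ : ℝ} (hγ : 0 < γ) :
    ∫ t in Ioi (0:ℝ), gfun γ t ≤ ∑' k : ℕ, gfun γ k := by
  have key : ∀ n : ℕ, ∫ t in (0:ℝ)..(n:ℝ), gfun γ t ≤ ∑' k : ℕ, gfun γ k := by
    intro n
    rw [← sum_adj hγ n]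
    calc ∑ k ∈ Finset.range n, ∫ t in (k:ℝ)..(k:ℝ)+1, gfun γ t
        ≤ ∑ k ∈ Finset.range n, gfun γ k :=
          Finset.sum_le_sum (fun k _ => interval_int_le hγ k)
      _ ≤ ∑' k : ℕ, gfun γ k :=
          Summable.sum_le_tsum _ (fun k _ => gfun_nonneg γ k) (summable_gfun hγ)
  have hT : Tendsto (fun n : ℕ => ∫ t in (0:ℝ)..(n:ℝ), gfun γ t) atTop
      (nhds (∫ t in Ioi (0:ℝ), gfun γ t)) :=
    intervalIntegral_tendsto_integral_Ioi 0 (integrable_gfun hγ) tendsto_natCast_atTop_atTop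
  exact le_of_tendsto hT (Eventually.of_forall key)

lemma tsum_le_integral {γ : ℝ} (hγ : 0 < γ) :
    ∑' k : ℕ, gfun γ k ≤ gfun γ 0 + ∫ t in Ioi (0:ℝ), gfun γ t := by
  rw [Summable.tsum_eq_zero_add (summable_gfun hγ)]
  push_cast
  apply add_le_add_right
  apply Summable.tsum_le_of_sum_range_le (by
    have := (summable_gfun hγ); exact (summable_nat_add_iff 1).2 this |>.congr (by intro k; push_cast; ring_nf))
  intro n
  calc ∑ k ∈ Finset.range n, gfun γ ((k:ℝ)+1)
      ≤ ∑ k ∈ Finset.range n, ∫ t in (k:ℝ)..(k:ℝ)+1, gfun γ t :=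
        Finset.sum_le_sum (fun k _ => le_interval_int hγ k)
    _ = ∫ t in (0:ℝ)..(n:ℝ), gfun γ t := sum_adj hγ n
    _ ≤ ∫ t in Ioi (0:ℝ), gfun γ t := by
        rw [intervalIntegral.integral_of_le (by positivity)]
        apply setIntegral_mono_set (integrable_gfun hγ)
          (Eventually.of_forall (fun t => gfun_nonneg γ t))
          (HasSubset.Subset.eventuallyLE Ioc_subset_Ioi_self)

lemma gfun_zero (γ : ℝ) : gfun γ 0 = 2 := by
  unfold gfun; norm_num

/-- For `u(z) = 4(Im z + 1)/|z+i|²`, one has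
`∑_{k≥0} u(i e^{k/γ}) = ∑_{k≥0} 4 e^{−k/γ}/(1+e^{−k/γ})`, and this sum is
asymptotically `4 γ log 2` as `γ → ∞`. -/
theorem stmt11 (u : ℂ → ℝ)
    (hu : ∀ z, u z = 4 * (z.im + 1) / ‖z + Complex.I‖ ^ 2) :
    (∀ γ : ℝ, 0 < γ →
      (∑' k : ℕ, u (Complex.I * Real.exp ((k : ℝ) / γ)))
        = ∑' k : ℕ, 4 * Real.exp (-(k : ℝ) / γ) / (1 + Real.exp (-(k : ℝ) / γ))) ∧
    Tendsto (fun γ : ℝ =>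
        (∑' k : ℕ, 4 * Real.exp (-(k : ℝ) / γ) / (1 + Real.exp (-(k : ℝ) / γ)))
          / (4 * γ * Real.log 2)) atTop (nhds 1) := by
  have hgs : ∀ γ : ℝ, (∑' k : ℕ, 4 * Real.exp (-(k : ℝ) / γ) / (1 + Real.exp (-(k : ℝ) / γ)))
      = ∑' k : ℕ, gfun γ k := by intro γ; rfl
  constructor
  · intro γ hγ
    apply tsum_congr
    intro k
    rw [hu]
    set e := Real.exp ((k:ℝ)/γ) with he
    have hepos : 0 < e := Real.exp_pos _
    have him : (Complex.I * (e:ℂ)).im = e := by simp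
    have habs : ‖Complex.I * (e:ℂ) + Complex.I‖ = e + 1 := by
      have : Complex.I * (e:ℂ) + Complex.I = Complex.I * (((e + 1 : ℝ)):ℂ) := by
        push_cast; ring
      rw [this, norm_mul, Complex.norm_I, one_mul, Complex.norm_of_nonneg (by linarith)]
    rw [him, habs]
    rw [neg_div, Real.exp_neg, ← he]
    have h1 : e + 1 ≠ 0 := by positivity
    have h2 : (1:ℝ) + e⁻¹ ≠ 0 := by positivity
    field_simp
  · simp only [hgs]
    have hlog : (0:ℝ) < Real.log 2 := Real.log_pos (by norm_num)
    have hup : Tendsto (fun γ : ℝ => 1 + 2 / (4 * γ * Real.log 2)) atTop (nhds 1) := by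
      have h0 : Tendsto (fun γ : ℝ => 2 / (4 * γ * Real.log 2)) atTop (nhds 0) := by
        apply Tendsto.div_atTop (tendsto_const_nhds (x := (2:ℝ)))
        have : Tendsto (fun γ : ℝ => γ * (4 * Real.log 2)) atTop atTop :=
          Tendsto.atTop_mul_const (by positivity) tendsto_id
        exact this.congr (fun γ => by ring)
      simpa using tendsto_const_nhds.add h0
    apply tendsto_of_tendsto_of_tendsto_of_le_of_le' (tendsto_const_nhds) hup
    · filter_upwards [eventually_gt_atTop (0:ℝ)] with γ hγ
      have hD : (0:ℝ) < 4 * γ * Real.log 2 := by positivity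
      rw [le_div_iff₀ hD, one_mul, ← integral_gfun hγ]
      exact integral_le_tsum hγ
    · filter_upwards [eventually_gt_atTop (0:ℝ)] with γ hγ
      have hD : (0:ℝ) < 4 * γ * Real.log 2 := by positivity
      rw [div_le_iff₀ hD]
      have h := tsum_le_integral hγ
      rw [integral_gfun hγ, gfun_zero] at h
      have hD' : (1 + 2 / (4 * γ * Real.log 2)) * (4 * γ * Real.log 2)
          = 4 * γ * Real.log 2 + 2 := by field_simp
      linarith
end

section
/- Let B be the Blaschke product with zeros (i e^{k/γ})_{k ∈ ℤ} defined by B(z) = ∏_{k ≤ 0} (z − i e^{k/γ})/(z + i e^{k/γ}) · ∏_{k > 0} (i e^{k/γ} − z)/(z + i e^{k/γ}). Then B satisfies the functional equation B(e^{1/γ} z) = −B(z) for all z in the upper half-plane. -/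
/-!
Multiplying `z` by `e^{1/γ}` turns the factor of the zero `i e^{k/γ}` into the factor of the zero
`i e^{(k-1)/γ}`, so the product is reindexed by one step; the only factor that changes form is the
one passing from `k ≤ 0` to `k > 0`, and it changes sign. The reindexing is legitimate because the
product converges absolutely: its `k`-th factor differs from `1` by `O(e^{-|k|/γ})`.
-/

open Complex

noncomputable def blaschkeTerm (γ : ℝ) (z : ℂ) (k : ℤ) : ℂ :=
  if k ≤ 0 then (z - I * Real.exp ((k : ℝ) / γ)) / (z + I * Real.exp ((k : ℝ) / γ))
  else (I * Real.exp ((k : ℝ) / γ) - z) / (z + I * Real.exp ((k : ℝ) / γ))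

lemma im_add_le_norm_add_I_mul (z : ℂ) (a : ℝ) : z.im + a ≤ ‖z + I * a‖ := by
  simpa using im_le_norm (z + I * a)

lemma norm_sub_I_mul_div_add_I_mul_sub_one_le {z : ℂ} (hz : 0 < z.im) {a : ℝ} (ha : 0 ≤ a) :
    ‖(z - I * a) / (z + I * a) - 1‖ ≤ 2 / z.im * a := by
  have hD := im_add_le_norm_add_I_mul z a
  rw [div_sub_one (norm_pos_iff.mp (by linarith)), norm_div,
    show z - I * a - (z + I * a) = -2 * I * a by ring]
  calc ‖-2 * I * (a : ℂ)‖ / ‖z + I * a‖ = 2 * a / ‖z + I * a‖ := by simp [abs_of_nonneg ha]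
    _ ≤ 2 * a / z.im := div_le_div_of_nonneg_left (by positivity) hz (by linarith)
    _ = 2 / z.im * a := by ring

lemma norm_I_mul_sub_div_add_I_mul_sub_one_le {z : ℂ} (hz : 0 ≤ z.im) {a : ℝ} (ha : 0 < a) :
    ‖(I * a - z) / (z + I * a) - 1‖ ≤ 2 * ‖z‖ * a⁻¹ := by
  have hD := im_add_le_norm_add_I_mul z a
  rw [div_sub_one (norm_pos_iff.mp (by linarith)), norm_div,
    show I * a - z - (z + I * a) = -2 * z by ring]
  calc ‖-2 * z‖ / ‖z + I * a‖ = 2 * ‖z‖ / ‖z + I * a‖ := by simp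
    _ ≤ 2 * ‖z‖ / a := div_le_div_of_nonneg_left (by positivity) ha (by linarith)
    _ = 2 * ‖z‖ * a⁻¹ := div_eq_mul_inv _ _

lemma norm_blaschkeTerm_sub_one_le (γ : ℝ) {z : ℂ} (hz : 0 < z.im) (k : ℤ) :
    ‖blaschkeTerm γ z k - 1‖ ≤ max (2 / z.im) (2 * ‖z‖) * Real.exp (-|(k : ℝ)| / γ) := by
  unfold blaschkeTerm
  split_ifs with hk
  · have hk' : -|(k : ℝ)| = k := by rw [abs_of_nonpos (by exact_mod_cast hk), neg_neg]
    rw [hk']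
    exact (norm_sub_I_mul_div_add_I_mul_sub_one_le hz (Real.exp_pos _).le).trans
      (by gcongr; exact le_max_left _ _)
  · have hk' : -|(k : ℝ)| / γ = -((k : ℝ) / γ) := by
      rw [abs_of_pos (by exact_mod_cast not_le.mp hk), neg_div]
    rw [hk', Real.exp_neg]
    exact (norm_I_mul_sub_div_add_I_mul_sub_one_le hz.le (Real.exp_pos _)).trans
      (by gcongr; exact le_max_right _ _)

lemma summable_exp_neg_abs_div {γ : ℝ} (hγ : 0 < γ) :
    Summable fun k : ℤ => Real.exp (-|(k : ℝ)| / γ) := by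
  have h : Summable fun n : ℕ => Real.exp (n * -γ⁻¹) :=
    Real.summable_exp_nat_mul_iff.mpr (neg_lt_zero.mpr (inv_pos.mpr hγ))
  apply Summable.of_nat_of_neg <;> simpa [div_eq_mul_inv] using h

lemma multipliable_blaschkeTerm {γ : ℝ} (hγ : 0 < γ) {z : ℂ} (hz : 0 < z.im) :
    Multipliable (blaschkeTerm γ z) := by
  have h := multipliable_one_add_of_summable <|
    ((summable_exp_neg_abs_div hγ).mul_left _).of_nonneg_of_le (fun _ => norm_nonneg _)
      (norm_blaschkeTerm_sub_one_le γ hz)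
  simpa using h

lemma blaschkeTerm_exp_mul (γ : ℝ) (z : ℂ) (k : ℤ) :
    blaschkeTerm γ (Real.exp (1 / γ) * z) k =
      blaschkeTerm γ z (k - 1) * if k = 1 then -1 else 1 := by
  have hc : (Real.exp (1 / γ) : ℂ) ≠ 0 := ofReal_ne_zero.mpr (Real.exp_pos _).ne'
  have hscale : (Real.exp (k / γ) : ℂ) = Real.exp (1 / γ) * Real.exp (((k - 1 : ℤ) : ℝ) / γ) := by
    rw [← ofReal_mul, ← Real.exp_add]; push_cast; ring_nf
  simp only [blaschkeTerm, hscale, mul_left_comm I, ← mul_sub, ← mul_add, mul_div_mul_left _ _ hc]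
  split_ifs <;> first | omega | ring

/-- The Blaschke product `B(z) = ∏_{k≤0} (z − ie^{k/γ})/(z + ie^{k/γ}) ·
∏_{k>0} (ie^{k/γ} − z)/(z + ie^{k/γ})` satisfies `B(e^{1/γ} z) = −B(z)` on the
upper half-plane. -/
theorem stmt13 (γ : ℝ) (hγ : 0 < γ) (B : ℂ → ℂ)
    (hB : ∀ z : ℂ, B z = ∏' k : ℤ,
      if k ≤ 0 then (z - Complex.I * Real.exp ((k : ℝ) / γ)) /
          (z + Complex.I * Real.exp ((k : ℝ) / γ))
      else (Complex.I * Real.exp ((k : ℝ) / γ) - z) /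
          (z + Complex.I * Real.exp ((k : ℝ) / γ))) :
    ∀ z : ℂ, 0 < z.im → B (Real.exp (1 / γ) * z) = -B z := by
  intro z hz
  have hB' (w : ℂ) : B w = ∏' k, blaschkeTerm γ w k := hB w
  have hBz : HasProd (blaschkeTerm γ z) (B z) := by
    rw [hB']; exact (multipliable_blaschkeTerm hγ hz).hasProd
  have hBshift : HasProd (fun k => blaschkeTerm γ z (k - 1)) (B z) :=
    ((Equiv.subRight 1).hasProd_iff (f := blaschkeTerm γ z)).mpr hBz
  have hBexp : HasProd (blaschkeTerm γ (Real.exp (1 / γ) * z)) (B z * -1) :=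
    (hBshift.mul (hasProd_ite_eq 1 (-1))).congr_fun (blaschkeTerm_exp_mul γ z)
  rw [hB', ← mul_neg_one]
  exact hBexp.tprod_eq
end

section
/- The function F(z) = 2 e^{−π²γ/2} sin(πγ log(−iz)) (principal logarithm) is bounded and analytic on the upper half-plane, and its zero set there is exactly {i e^{k/γ} : k ∈ ℤ}. -/
open Complex

lemma abs_sin_le_exp_abs_im (w : ℂ) :
    ‖Complex.sin w‖ ≤ Real.exp |w.im| := by
  rw [Complex.sin]
  calc ‖(Complex.exp (-w * I) - Complex.exp (w * I)) * I / 2‖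
      ≤ (‖Complex.exp (-w*I)‖ + ‖Complex.exp (w*I)‖) * 1 / 2 := by
        rw [norm_div, norm_mul, Complex.norm_I]
        gcongr
        · exact norm_sub_le _ _
        · simp
    _ = (Real.exp w.im + Real.exp (-w.im)) / 2 := by
        rw [Complex.norm_exp, Complex.norm_exp]; simp
    _ ≤ Real.exp |w.im| := by
        rw [div_le_iff₀ (by norm_num)]
        have h1 : Real.exp w.im ≤ Real.exp |w.im| := Real.exp_le_exp.2 (le_abs_self _)
        have h2 : Real.exp (-w.im) ≤ Real.exp |w.im| := Real.exp_le_exp.2 (neg_le_abs _)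
        linarith

/-- `F(z) = 2 e^{−π²γ/2} sin(πγ log(−iz))` is analytic and bounded (by 2) on the
upper half-plane, and its zeros there are exactly the points `i e^{k/γ}`, `k ∈ ℤ`. -/
theorem stmt15 (γ : ℝ) (hγ : 0 < γ) (F : ℂ → ℂ)
    (hF : ∀ z : ℂ, F z = 2 * Real.exp (-(Real.pi ^ 2 * γ) / 2) *
        Complex.sin (Real.pi * γ * Complex.log (-Complex.I * z))) :
    DifferentiableOn ℂ F {z : ℂ | 0 < z.im} ∧
    (∀ z : ℂ, 0 < z.im → ‖F z‖ ≤ 2) ∧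
    (∀ z : ℂ, 0 < z.im →
      (F z = 0 ↔ ∃ k : ℤ, z = Complex.I * Real.exp ((k : ℝ) / γ))) := by
  have hπ := Real.pi_pos
  have hre : ∀ z : ℂ, 0 < z.im → 0 < (-I * z).re := by
    intro z hz; simp [Complex.mul_re]; linarith
  have hne : ∀ z : ℂ, 0 < z.im → -I * z ≠ 0 := by
    intro z hz h
    have := hre z hz
    rw [h] at this; simp at this
  refine ⟨?_, ?_, ?_⟩
  · -- Differentiability
    intro z hz
    have hz' : 0 < z.im := hz
    have hslit : -I * z ∈ Complex.slitPlane := Complex.mem_slitPlane_iff.2 (Or.inl (hre z hz'))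
    have : DifferentiableAt ℂ (fun z : ℂ => 2 * (Real.exp (-(Real.pi ^ 2 * γ) / 2) : ℂ) *
        Complex.sin (Real.pi * γ * Complex.log (-I * z))) z := by
      apply DifferentiableAt.mul (differentiableAt_const _)
      apply Complex.differentiableAt_sin.comp
      apply DifferentiableAt.mul (differentiableAt_const _)
      exact (Complex.differentiableAt_log hslit).comp z
        ((differentiableAt_const _).mul differentiableAt_id)
    refine DifferentiableAt.differentiableWithinAt ?_
    exact this.congr_of_eventuallyEq (Filter.Eventually.of_forall fun w => hF w)
  · -- Boundedness
    intro z hz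
    rw [hF]
    set w : ℂ := Real.pi * γ * Complex.log (-I * z) with hw
    have harg : |(-I * z).arg| < Real.pi / 2 :=
      Complex.abs_arg_lt_pi_div_two_iff.2 (Or.inl (hre z hz))
    have him : |w.im| ≤ Real.pi ^ 2 * γ / 2 := by
      have : w.im = Real.pi * γ * (-I * z).arg := by
        simp [hw, Complex.log_im]
      rw [this, abs_mul]
      have h1 : |Real.pi * γ| = Real.pi * γ := abs_of_pos (by positivity)
      rw [h1]
      calc Real.pi * γ * |(-I * z).arg| ≤ Real.pi * γ * (Real.pi / 2) := by
            gcongr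
        _ = Real.pi ^ 2 * γ / 2 := by ring
    have hsin : ‖Complex.sin w‖ ≤ Real.exp (Real.pi ^ 2 * γ / 2) :=
      (abs_sin_le_exp_abs_im w).trans (Real.exp_le_exp.2 him)
    calc ‖2 * (Real.exp (-(Real.pi ^ 2 * γ) / 2) : ℂ) * Complex.sin w‖
        = ‖(2 : ℂ)‖ * ‖((Real.exp (-(Real.pi ^ 2 * γ) / 2) : ℂ))‖ *
            ‖Complex.sin w‖ := by rw [norm_mul, norm_mul]
      _ = 2 * Real.exp (-(Real.pi ^ 2 * γ) / 2) * ‖Complex.sin w‖ := by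
          rw [Complex.norm_two, Complex.norm_real, Real.norm_eq_abs, abs_of_pos (Real.exp_pos _)]
      _ ≤ 2 * Real.exp (-(Real.pi ^ 2 * γ) / 2) * Real.exp (Real.pi ^ 2 * γ / 2) := by
          gcongr
      _ = 2 := by
          have h0 : -(Real.pi ^ 2 * γ) / 2 + Real.pi ^ 2 * γ / 2 = 0 := by ring
          rw [mul_assoc, ← Real.exp_add, h0, Real.exp_zero, mul_one]
  · -- Zeros
    intro z hz
    rw [hF]
    have h2 : (2 : ℂ) * (Real.exp (-(Real.pi ^ 2 * γ) / 2) : ℂ) ≠ 0 := by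
      apply mul_ne_zero two_ne_zero
      exact_mod_cast Real.exp_ne_zero _
    have hγc : (γ : ℂ) ≠ 0 := by exact_mod_cast ne_of_gt hγ
    rw [mul_eq_zero, or_iff_right h2, Complex.sin_eq_zero_iff]
    constructor
    · rintro ⟨k, hk⟩
      refine ⟨k, ?_⟩
      have hlog : Complex.log (-I * z) = ((k : ℝ) / γ : ℝ) := by
        have hπγ : (Real.pi : ℂ) * γ ≠ 0 := by
          exact_mod_cast mul_ne_zero (ne_of_gt hπ) (ne_of_gt hγ)
        apply mul_left_cancel₀ hπγ
        rw [hk]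
        push_cast
        field_simp
      have : -I * z = Complex.exp (((k : ℝ) / γ : ℝ)) := by
        rw [← hlog, Complex.exp_log (hne z hz)]
      have hz' : z = I * Complex.exp (((k : ℝ) / γ : ℝ)) := by
        have := congrArg (fun w => I * w) this
        simpa [← mul_assoc, Complex.I_mul_I] using this
      rw [hz', Complex.ofReal_exp]
    · rintro ⟨k, rfl⟩
      refine ⟨k, ?_⟩
      have hval : -I * (I * (Real.exp ((k : ℝ) / γ) : ℂ)) = Complex.exp (((k : ℝ) / γ : ℝ)) := by
        rw [← mul_assoc]
        simp [Complex.ofReal_exp]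
      rw [hval, Complex.log_exp (by simp; linarith) (by simp; linarith)]
      push_cast
      field_simp
end

section
/- For any sequence Z in the upper half-plane with δ = δ(Z) > 0, the Havin characteristic satisfies c_H(Z) ≤ (1 + 2 log(1/δ))/δ, where c_H(Z) = sup_k ∑_j (4 y_k y_j/|z_k − conj(z_j)|²)·(1/|B_j(z_j)|); consequently M(Z) ≤ 2e·c_H(Z) implies M(Z) ≤ (2e + 4e log(1/δ))/δ. -/
open Complex Finset Real

lemma stmt19_key (a b : ℂ) :
    (‖a - (starRingEnd ℂ) b‖)^2 - (‖a-b‖)^2 = 4 * a.im * b.im := by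
  rw [Complex.sq_norm, Complex.sq_norm, Complex.normSq_apply, Complex.normSq_apply]
  simp [Complex.sub_re, Complex.sub_im, Complex.conj_re, Complex.conj_im]
  ring

lemma stmt19_logineq (t : ℝ) (h0 : 0 < t) : 1 - t^2 ≤ -2 * Real.log t := by
  have := Real.log_le_sub_one_of_pos h0
  nlinarith [sq_nonneg (t-1)]

/-- For a finite sequence `Z` in the upper half-plane with separation constant
`δ = δ(Z) > 0`, the Havin characteristic satisfies `c_H(Z) ≤ (1 + 2 log(1/δ))/δ`;
consequently, any `M` with `M ≤ 2e·c_H(Z)` satisfies `M ≤ (2e + 4e log(1/δ))/δ`. -/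
theorem stmt19 (N : ℕ) (hN : 0 < N) (z : Fin N → ℂ)
    (him : ∀ j, 0 < (z j).im) (hinj : Function.Injective z) (δ : ℝ) (hδpos : 0 < δ)
    (hδ : δ = ⨅ j, ∏ k ∈ Finset.univ.erase j,
        ‖(z j - z k) / (z j - (starRingEnd ℂ) (z k))‖) :
    (⨆ k, ∑ j, 4 * (z k).im * (z j).im / ‖z k - (starRingEnd ℂ) (z j)‖ ^ 2 *
        (1 / ∏ l ∈ Finset.univ.erase j,
          ‖(z j - z l) / (z j - (starRingEnd ℂ) (z l))‖))
      ≤ (1 + 2 * Real.log (1 / δ)) / δ ∧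
    ∀ M : ℝ,
      M ≤ 2 * Real.exp 1 *
        ⨆ k, ∑ j, 4 * (z k).im * (z j).im / ‖z k - (starRingEnd ℂ) (z j)‖ ^ 2 *
          (1 / ∏ l ∈ Finset.univ.erase j,
            ‖(z j - z l) / (z j - (starRingEnd ℂ) (z l))‖) →
      M ≤ (2 * Real.exp 1 + 4 * Real.exp 1 * Real.log (1 / δ)) / δ := by
  haveI : Nonempty (Fin N) := ⟨⟨0, hN⟩⟩
  set ρ : Fin N → Fin N → ℝ :=
    fun j l => ‖(z j - z l) / (z j - (starRingEnd ℂ) (z l))‖ with hρdef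
  set P : Fin N → ℝ := fun j => ∏ l ∈ Finset.univ.erase j, ρ j l with hPdef
  -- z j - conj (z l) ≠ 0
  have hne : ∀ j l : Fin N, z j - (starRingEnd ℂ) (z l) ≠ 0 := by
    intro j l h
    have : (z j - (starRingEnd ℂ) (z l)).im = 0 := by rw [h]; simp
    simp [Complex.sub_im, Complex.conj_im] at this
    have := him j; have := him l; linarith
  have habspos : ∀ j l : Fin N, 0 < ‖z j - (starRingEnd ℂ) (z l)‖ :=
    fun j l => norm_pos_iff.mpr (hne j l)
  -- ρ ≤ 1
  have hρle : ∀ j l, ρ j l ≤ 1 := by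
    intro j l
    rw [hρdef]
    simp only [norm_div]
    rw [div_le_one (habspos j l)]
    have hk := stmt19_key (z j) (z l)
    have h4 : 0 ≤ 4 * (z j).im * (z l).im := by nlinarith [him j, him l]
    nlinarith [norm_nonneg (z j - z l),
      norm_nonneg (z j - (starRingEnd ℂ) (z l))]
  have hρpos : ∀ j l, j ≠ l → 0 < ρ j l := by
    intro j l hjl
    simp only [hρdef, norm_div]
    apply div_pos
    · exact norm_pos_iff.mpr (sub_ne_zero.mpr (fun h => hjl (hinj h)))
    · exact habspos j l
  have hPpos : ∀ j, 0 < P j := by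
    intro j
    exact Finset.prod_pos fun l hl => hρpos j l (Ne.symm (Finset.ne_of_mem_erase hl))
  have hδleP : ∀ j, δ ≤ P j := by
    intro j
    rw [hδ]
    exact ciInf_le (Finite.bddBelow_range _) j
  -- term identity
  have hterm : ∀ k j : Fin N,
      4 * (z k).im * (z j).im / ‖z k - (starRingEnd ℂ) (z j)‖ ^ 2
        = 1 - (ρ k j)^2 := by
    intro k j
    have hk := stmt19_key (z k) (z j)
    have hd : (0:ℝ) < ‖z k - (starRingEnd ℂ) (z j)‖ ^ 2 :=
      pow_pos (habspos k j) 2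
    rw [hρdef]
    simp only [norm_div, div_pow]
    rw [eq_sub_iff_add_eq, ← add_div, div_eq_one_iff_eq (ne_of_gt hd)]
    linarith
  have htermnn : ∀ k j : Fin N, 0 ≤ 1 - (ρ k j)^2 := by
    intro k j
    have h1 := hρle k j
    have h2 : 0 ≤ ρ k j := norm_nonneg _
    nlinarith
  -- the per-k bound
  have hsum : ∀ k : Fin N,
      (∑ j, 4 * (z k).im * (z j).im / ‖z k - (starRingEnd ℂ) (z j)‖ ^ 2 *
        (1 / P j)) ≤ (1 + 2 * Real.log (1 / δ)) / δ := by
    intro k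
    have step1 : (∑ j, 4 * (z k).im * (z j).im /
        ‖z k - (starRingEnd ℂ) (z j)‖ ^ 2 * (1 / P j))
        ≤ ∑ j, (1 - (ρ k j)^2) * (1 / δ) := by
      apply Finset.sum_le_sum
      intro j _
      rw [hterm k j]
      apply mul_le_mul_of_nonneg_left _ (htermnn k j)
      exact one_div_le_one_div_of_le hδpos (hδleP j)
    have hsplit : ∑ j, (1 - (ρ k j)^2) = 1 + ∑ j ∈ Finset.univ.erase k, (1 - (ρ k j)^2) := by
      rw [← Finset.add_sum_erase _ _ (Finset.mem_univ k)]
      congr 1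
      have : ρ k k = 0 := by rw [hρdef]; simp
      rw [this]; ring
    have step2 : ∑ j ∈ Finset.univ.erase k, (1 - (ρ k j)^2) ≤ 2 * Real.log (1 / δ) := by
      have h1 : ∑ j ∈ Finset.univ.erase k, (1 - (ρ k j)^2)
          ≤ ∑ j ∈ Finset.univ.erase k, (-2 * Real.log (ρ k j)) := by
        apply Finset.sum_le_sum
        intro j hj
        exact stmt19_logineq _ (hρpos k j (Ne.symm (Finset.ne_of_mem_erase hj)))
      have h2 : ∑ j ∈ Finset.univ.erase k, (-2 * Real.log (ρ k j))
          = -2 * Real.log (P k) := by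
        rw [← Finset.mul_sum, hPdef]
        congr 1
        rw [Real.log_prod]
        intro j hj
        exact ne_of_gt (hρpos k j (Ne.symm (Finset.ne_of_mem_erase hj)))
      have h3 : -2 * Real.log (P k) ≤ 2 * Real.log (1 / δ) := by
        rw [one_div, Real.log_inv]
        have := Real.log_le_log hδpos (hδleP k)
        linarith
      linarith
    calc (∑ j, 4 * (z k).im * (z j).im /
            ‖z k - (starRingEnd ℂ) (z j)‖ ^ 2 * (1 / P j))
        ≤ ∑ j, (1 - (ρ k j)^2) * (1 / δ) := step1
      _ = (∑ j, (1 - (ρ k j)^2)) * (1 / δ) := by rw [Finset.sum_mul]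
      _ = (1 + ∑ j ∈ Finset.univ.erase k, (1 - (ρ k j)^2)) * (1 / δ) := by rw [hsplit]
      _ ≤ (1 + 2 * Real.log (1 / δ)) * (1 / δ) := by
          apply mul_le_mul_of_nonneg_right _ (by positivity)
          linarith [step2]
      _ = (1 + 2 * Real.log (1 / δ)) / δ := by rw [mul_one_div]
  have hsup : (⨆ k, ∑ j, 4 * (z k).im * (z j).im /
      ‖z k - (starRingEnd ℂ) (z j)‖ ^ 2 * (1 / P j))
      ≤ (1 + 2 * Real.log (1 / δ)) / δ := ciSup_le hsum
  refine ⟨hsup, ?_⟩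
  intro M hM
  have he : (0:ℝ) < 2 * Real.exp 1 := by positivity
  have : M ≤ 2 * Real.exp 1 * ((1 + 2 * Real.log (1 / δ)) / δ) :=
    hM.trans (mul_le_mul_of_nonneg_left hsup he.le)
  calc M ≤ 2 * Real.exp 1 * ((1 + 2 * Real.log (1 / δ)) / δ) := this
    _ = (2 * Real.exp 1 + 4 * Real.exp 1 * Real.log (1 / δ)) / δ := by ring
end
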